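/- Let Ω ⊆ ℝⁿ be an open bounded set and let u : Ω → ℝ be a bounded continuous function that is locally semiconcave in Ω. Let x ∈ Ω be a point at which u is (Fréchet) differentiable. Then for ε > 0 small enough the sup-convolution u^ε is differentiable at x, and lim_{ε→0⁺} ∇u^ε(x) = ∇u(x). -/

import Mathlib

/-!
Fix a closed ball `closedBall x R ⊆ Ω` on which `u` is `C`-semiconcave and let `M` bound `|u|`.
For small `ε` the supremum defining `u^ε(z)`, for `z` near `x`, is attained at some `y` with
`‖y - z‖ ≤ 2√(Mε)`. Touching `u^ε` from below at `x` by `z ↦ u y - ‖z - y‖²/(2ε)`, with `y` the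
maximizer for `x`, bounds it below by an affine function with slope `(y - x)/ε` minus
`‖h‖²/(2ε)`, while semiconcavity of `u` at the midpoint of the maximizers for `x + h` and `x - h`
bounds its second differences above by `C/(1 - Cε) ‖h‖²`. Together these give
`∇u^ε(x) = (y - x)/ε`. Finally, since the maximizer `y = x + ε∇u^ε(x)` beats the competitor
`x + ε∇u(x)`, a first-order expansion of `u` at `x` forces `∇u^ε(x) → ∇u(x)`.
-/

open Set Metric Filter

/-- The sup-convolution `u^ε` of a function `u : Ω → ℝ`. -/
noncomputable def supConv {n : ℕ} (ε : ℝ) (Ω : Set (EuclideanSpace ℝ (Fin n)))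
    (u : EuclideanSpace ℝ (Fin n) → ℝ) (x : EuclideanSpace ℝ (Fin n)) : ℝ :=
  sSup ((fun y => u y - ‖x - y‖ ^ 2 / (2 * ε)) '' Ω)

/-- A function `u` is locally semiconcave on an open set `A` if for every compact `K ⊆ A`
there is a constant `C ≥ 0` such that the semiconcavity inequality holds on every
segment contained in `K`. -/
def LocallySemiconcaveOn {n : ℕ} (A : Set (EuclideanSpace ℝ (Fin n)))
    (u : EuclideanSpace ℝ (Fin n) → ℝ) : Prop :=
  ∀ K : Set (EuclideanSpace ℝ (Fin n)), K ⊆ A → IsCompact K →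
    ∃ C : ℝ, 0 ≤ C ∧ ∀ x y : EuclideanSpace ℝ (Fin n), segment ℝ x y ⊆ K →
      ∀ l : ℝ, l ∈ Set.Icc (0:ℝ) 1 →
        l * u x + (1 - l) * u y - C * (l * (1 - l)) / 2 * ‖x - y‖ ^ 2
          ≤ u (l • x + (1 - l) • y)

open Topology Asymptotics InnerProductSpace RealInnerProductSpace

theorem bddAbove_image_of_forall_abs_le {α : Type*} {f : α → ℝ} {s : Set α} {M : ℝ}
    (h : ∀ y ∈ s, |f y| ≤ M) : BddAbove (f '' s) :=
  ⟨M, forall_mem_image.2 fun y hy => (abs_le.1 (h y hy)).2⟩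

theorem mul_norm_sq_le_of_mul_lt_one {F : Type*} [SeminormedAddCommGroup F] {C ε : ℝ}
    (hC : 0 ≤ C) (hε : 0 < ε) (hCε : C * ε < 1) (a v : F) :
    C * ‖v‖ ^ 2 ≤ C / (1 - C * ε) * ‖a‖ ^ 2 + ‖a - v‖ ^ 2 / ε := by
  have hCε' : 0 < 1 - C * ε := by linarith
  calc C * ‖v‖ ^ 2 ≤ C * (‖a‖ + ‖a - v‖) ^ 2 := by
        have := norm_le_norm_add_norm_sub' v a
        rw [norm_sub_rev] at this
        gcongr
    _ ≤ C / (1 - C * ε) * ‖a‖ ^ 2 + ‖a - v‖ ^ 2 / ε := by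
      rw [div_mul_eq_mul_div, div_add_div _ _ hCε'.ne' hε.ne', le_div_iff₀ (by positivity)]
      nlinarith [sq_nonneg (C * ε * ‖a‖ - (1 - C * ε) * ‖a - v‖)]

theorem lt_of_sq_le_mul_add {t δ G : ℝ} (ht : 0 ≤ t) (hδ : 0 < δ) (hG : 0 ≤ G)
    (h : t ^ 2 ≤ 2 * (δ ^ 2 / (8 * (G + δ))) * (2 * G + t)) : t < δ := by
  by_contra! hle
  rw [mul_div_assoc', div_mul_eq_mul_div, le_div_iff₀ (by positivity)] at h
  nlinarith [mul_le_mul_of_nonneg_left (mul_le_mul hle hle hδ.le ht) hG,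
    mul_nonneg (mul_nonneg hδ.le ht) (sub_nonneg.2 hle), mul_pos (mul_pos hδ hδ) (hδ.trans_le hle)]

def SemiconcaveOnWith {E : Type*} [SeminormedAddCommGroup E] [NormedSpace ℝ E] (C : ℝ)
    (u : E → ℝ) (K : Set E) : Prop :=
  ∀ x y, segment ℝ x y ⊆ K → ∀ l ∈ Icc (0 : ℝ) 1,
    l * u x + (1 - l) * u y - C * (l * (1 - l)) / 2 * ‖x - y‖ ^ 2 ≤ u (l • x + (1 - l) • y)

theorem SemiconcaveOnWith.add_le_two_mul_midpoint {E : Type*} [SeminormedAddCommGroup E]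
    [NormedSpace ℝ E] {C : ℝ} {u : E → ℝ} {K : Set E} (hu : SemiconcaveOnWith C u K) {x y : E}
    (hxy : segment ℝ x y ⊆ K) :
    u x + u y - C / 4 * ‖x - y‖ ^ 2 ≤ 2 * u (midpoint ℝ x y) := by
  have h := hu x y hxy (1 / 2) ⟨by norm_num, by norm_num⟩
  have hmid : (1 / 2 : ℝ) • x + (1 - 1 / 2 : ℝ) • y = midpoint ℝ x y := by
    rw [midpoint_eq_smul_add, smul_add]; norm_num
  rw [hmid] at h
  linarith

section InnerProductSpace

variable {E : Type*} [NormedAddCommGroup E] [InnerProductSpace ℝ E] [CompleteSpace E]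

theorem hasGradientAt_of_quadratic_bounds {f : E → ℝ} {x p : E} {K : ℝ}
    (hlow : ∀ᶠ h in 𝓝 0, f x + ⟪p, h⟫ - K * ‖h‖ ^ 2 ≤ f (x + h))
    (hupp : ∀ᶠ h in 𝓝 0, f (x + h) + f (x - h) - 2 * f x ≤ K * ‖h‖ ^ 2) :
    HasGradientAt f p x := by
  have hlow' : ∀ᶠ h in 𝓝 (0 : E), f x - ⟪p, h⟫ - K * ‖h‖ ^ 2 ≤ f (x - h) := by
    simpa [sub_eq_add_neg, inner_neg_right] using
      (continuous_neg.tendsto' (0 : E) 0 neg_zero).eventually hlow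
  have hO : (fun h => f (x + h) - f x - ⟪p, h⟫) =O[𝓝 0] fun h => ‖h‖ ^ 2 := by
    refine IsBigO.of_bound (2 * |K|) ?_
    filter_upwards [hlow, hlow', hupp] with h h₁ h₂ h₃
    rw [Real.norm_eq_abs, norm_pow, norm_norm, abs_le]
    constructor <;> nlinarith [le_abs_self K, neg_abs_le K, sq_nonneg ‖h‖]
  rw [hasGradientAt_iff_hasFDerivAt, hasFDerivAt_iff_isLittleO_nhds_zero]
  simpa only [toDual_apply_apply] using hO.trans_isLittleO (isLittleO_norm_pow_id one_lt_two)

theorem HasGradientAt.tendsto_of_le_quadratic_penalty {u : E → ℝ} {g x : E}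
    (hu : HasGradientAt u g x) {p : ℝ → E}
    (hp : Tendsto (fun ε => ε • p ε) (𝓝[>] 0) (𝓝 0))
    (hle : ∀ᶠ ε in 𝓝[>] 0, u (x + ε • g) - ‖ε • g‖ ^ 2 / (2 * ε)
      ≤ u (x + ε • p ε) - ‖ε • p ε‖ ^ 2 / (2 * ε)) :
    Tendsto p (𝓝[>] 0) (𝓝 g) := by
  have hg : Tendsto (fun ε : ℝ => ε • g) (𝓝[>] 0) (𝓝 0) :=
    ((continuous_id.smul continuous_const).tendsto' 0 0 (zero_smul ℝ g)).mono_left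
      nhdsWithin_le_nhds
  have hlo : (fun w => u (x + w) - u x - ⟪g, w⟫) =o[𝓝 0] fun w => w := by
    simpa only [toDual_apply_apply] using
      hasFDerivAt_iff_isLittleO_nhds_zero.1 (hasGradientAt_iff_hasFDerivAt.1 hu)
  rw [Metric.tendsto_nhds]
  intro δ hδ
  set η := δ ^ 2 / (8 * (‖g‖ + δ))
  have hη : 0 < η := by positivity
  filter_upwards [hp.eventually (hlo.def hη), hg.eventually (hlo.def hη), hle,
    self_mem_nhdsWithin] with ε hεp hεg hle (hε : 0 < ε)
  simp only [norm_smul, Real.norm_eq_abs, abs_of_pos hε, inner_smul_right,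
    real_inner_self_eq_norm_sq, mul_pow] at hεp hεg hle
  have hhalf : ∀ a : ℝ, ε ^ 2 * a / (2 * ε) = ε * (a / 2) := fun a => by field_simp
  rw [hhalf, hhalf] at hle
  have hpen : ε * ‖p ε - g‖ ^ 2 ≤ ε * (2 * η * (2 * ‖g‖ + ‖p ε - g‖)) := by
    have htri := norm_le_norm_add_norm_sub' (p ε) g
    rw [norm_sub_sq_real, real_inner_comm]
    nlinarith [abs_le.1 hεp, abs_le.1 hεg, mul_le_mul_of_nonneg_left htri (mul_nonneg hη.le hε.le)]
  rw [dist_eq_norm]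
  exact lt_of_sq_le_mul_add (norm_nonneg _) hδ (norm_nonneg g) (le_of_mul_le_mul_left hpen hε)

end InnerProductSpace

section supConv

variable {n : ℕ} {Ω : Set (EuclideanSpace ℝ (Fin n))} {u : EuclideanSpace ℝ (Fin n) → ℝ} {ε : ℝ}

theorem le_supConv (hbdd : BddAbove (u '' Ω)) (hε : 0 < ε) (z : EuclideanSpace ℝ (Fin n))
    {y : EuclideanSpace ℝ (Fin n)} (hy : y ∈ Ω) :
    u y - ‖z - y‖ ^ 2 / (2 * ε) ≤ supConv ε Ω u z := by
  obtain ⟨M, hM⟩ := hbdd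
  refine le_csSup ⟨M, forall_mem_image.2 fun y' hy' => ?_⟩ (mem_image_of_mem _ hy)
  have : 0 ≤ ‖z - y'‖ ^ 2 / (2 * ε) := by positivity
  linarith [hM (mem_image_of_mem u hy')]

theorem exists_supConv_eq {M : ℝ} (hu : ContinuousOn u Ω) (hM : ∀ y ∈ Ω, |u y| ≤ M)
    (hε : 0 < ε) {z : EuclideanSpace ℝ (Fin n)} (hball : closedBall z (2 * √(M * ε)) ⊆ Ω) :
    ∃ y ∈ closedBall z (2 * √(M * ε)), supConv ε Ω u z = u y - ‖z - y‖ ^ 2 / (2 * ε) := by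
  set ρ := 2 * √(M * ε)
  have hz : z ∈ Ω := hball (mem_closedBall_self (by positivity))
  have hM₀ : 0 ≤ M := (abs_nonneg _).trans (hM z hz)
  have hρ : ρ ^ 2 / (2 * ε) = 2 * M := by
    rw [mul_pow, Real.sq_sqrt (by positivity)]
    field_simp
  have hbdd : BddAbove (u '' Ω) := bddAbove_image_of_forall_abs_le hM
  obtain ⟨y, hy, hmax⟩ := (isCompact_closedBall z ρ).exists_isMaxOn
    (f := fun y => u y - ‖z - y‖ ^ 2 / (2 * ε)) (nonempty_closedBall.2 (by positivity))
    ((hu.mono hball).sub (Continuous.continuousOn (by fun_prop)))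
  refine ⟨y, hy, le_antisymm (csSup_le ⟨_, mem_image_of_mem _ hz⟩ ?_)
    (le_supConv hbdd hε z (hball hy))⟩
  rintro _ ⟨y', hy', rfl⟩
  by_cases hy'ρ : y' ∈ closedBall z ρ
  · exact hmax hy'ρ
  · have hfar : ρ ^ 2 / (2 * ε) ≤ ‖z - y'‖ ^ 2 / (2 * ε) := by
      rw [mem_closedBall, dist_comm, dist_eq_norm, not_le] at hy'ρ
      gcongr
    have hzz : u z ≤ u y - ‖z - y‖ ^ 2 / (2 * ε) := by
      simpa using hmax (mem_closedBall_self (by positivity) : z ∈ closedBall z ρ)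
    show u y' - ‖z - y'‖ ^ 2 / (2 * ε) ≤ _
    linarith [abs_le.1 (hM y' hy'), abs_le.1 (hM z hz)]

theorem le_supConv_add (hbdd : BddAbove (u '' Ω)) (hε : 0 < ε) {x y : EuclideanSpace ℝ (Fin n)}
    (hy : y ∈ Ω) (hxy : supConv ε Ω u x = u y - ‖x - y‖ ^ 2 / (2 * ε))
    (h : EuclideanSpace ℝ (Fin n)) :
    supConv ε Ω u x + ⟪ε⁻¹ • (y - x), h⟫ - ‖h‖ ^ 2 / (2 * ε) ≤ supConv ε Ω u (x + h) := by
  calc supConv ε Ω u x + ⟪ε⁻¹ • (y - x), h⟫ - ‖h‖ ^ 2 / (2 * ε)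
      = u y - ‖(x - y) + h‖ ^ 2 / (2 * ε) := by
        have hinner : ⟪ε⁻¹ • (y - x), h⟫ = -(2 * ⟪x - y, h⟫) / (2 * ε) := by
          rw [real_inner_smul_left, ← neg_sub x y, inner_neg_left]
          field_simp
        rw [hxy, norm_add_sq_real, hinner]
        ring
    _ ≤ supConv ε Ω u (x + h) := by
      rw [sub_add_eq_add_sub]
      exact le_supConv hbdd hε (x + h) hy

theorem supConv_second_difference_le (hbdd : BddAbove (u '' Ω)) (hε : 0 < ε) {C : ℝ}
    (hC : 0 ≤ C) (hCε : C * ε < 1) {x h y₁ y₂ : EuclideanSpace ℝ (Fin n)}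
    (h₁ : supConv ε Ω u (x + h) = u y₁ - ‖x + h - y₁‖ ^ 2 / (2 * ε))
    (h₂ : supConv ε Ω u (x - h) = u y₂ - ‖x - h - y₂‖ ^ 2 / (2 * ε))
    (hmid : midpoint ℝ y₁ y₂ ∈ Ω)
    (hsc : u y₁ + u y₂ - C / 4 * ‖y₁ - y₂‖ ^ 2 ≤ 2 * u (midpoint ℝ y₁ y₂)) :
    supConv ε Ω u (x + h) + supConv ε Ω u (x - h) - 2 * supConv ε Ω u x
      ≤ C / (1 - C * ε) * ‖h‖ ^ 2 := by
  have h₀ := le_supConv hbdd hε x hmid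
  have hpar : ‖x - midpoint ℝ y₁ y₂‖ ^ 2
      = (‖x + h - y₁‖ ^ 2 + ‖x - h - y₂‖ ^ 2) / 2 - ‖(2 : ℝ) • h - (y₁ - y₂)‖ ^ 2 / 4 := by
    have hxm : x - midpoint ℝ y₁ y₂ = (1 / 2 : ℝ) • ((x + h - y₁) + (x - h - y₂)) := by
      rw [midpoint_eq_smul_add, invOf_eq_inv]
      module
    have hdiff : (x + h - y₁) - (x - h - y₂) = (2 : ℝ) • h - (y₁ - y₂) := by module
    have hpar := parallelogram_law_with_norm ℝ (x + h - y₁) (x - h - y₂)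
    rw [hdiff] at hpar
    rw [hxm, norm_smul, mul_pow]
    norm_num
    linarith
  have hyoung := mul_norm_sq_le_of_mul_lt_one hC hε hCε ((2 : ℝ) • h) (y₁ - y₂)
  rw [norm_smul, Real.norm_two, mul_pow] at hyoung
  rw [hpar] at h₀
  linear_combination h₁ + h₂ + 2 * h₀ + hsc + hyoung / 4

theorem hasGradientAt_supConv_of_closedBall_subset {M C R : ℝ} (hu : ContinuousOn u Ω)
    (hM : ∀ y ∈ Ω, |u y| ≤ M) {x : EuclideanSpace ℝ (Fin n)} (hR : closedBall x R ⊆ Ω)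
    (hC : 0 ≤ C) (hsc : SemiconcaveOnWith C u (closedBall x R)) (hε : 0 < ε)
    (hCε : C * ε < 1) (hρ : 2 * √(M * ε) < R / 4) :
    ∃ y ∈ closedBall x (2 * √(M * ε)), supConv ε Ω u x = u y - ‖x - y‖ ^ 2 / (2 * ε) ∧
      HasGradientAt (supConv ε Ω u) (ε⁻¹ • (y - x)) x := by
  set ρ := 2 * √(M * ε)
  have hR₀ : 0 < R := by linarith [show 0 ≤ ρ by positivity]
  have hhalf : closedBall x (R / 2) ⊆ Ω := (closedBall_subset_closedBall (by linarith)).trans hR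
  have hbdd : BddAbove (u '' Ω) := bddAbove_image_of_forall_abs_le hM
  have hmax : ∀ z ∈ closedBall x (R / 4), ∃ y ∈ closedBall x (R / 2),
      supConv ε Ω u z = u y - ‖z - y‖ ^ 2 / (2 * ε) := fun z hz => by
    have hzρ : closedBall z ρ ⊆ closedBall x (R / 2) :=
      closedBall_subset_closedBall' (by rw [mem_closedBall] at hz; linarith)
    obtain ⟨y, hy, hzy⟩ := exists_supConv_eq hu hM hε (hzρ.trans hhalf)
    exact ⟨y, hzρ hy, hzy⟩
  obtain ⟨y, hy, hxy⟩ := exists_supConv_eq hu hM hε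
    ((closedBall_subset_closedBall (by linarith)).trans hhalf)
  have hCε' : 0 < 1 - C * ε := by linarith
  refine ⟨y, hy, hxy, hasGradientAt_of_quadratic_bounds (K := C / (1 - C * ε) + 1 / (2 * ε))
    (Eventually.of_forall fun h => ?_) ?_⟩
  · have hlow := le_supConv_add hbdd hε (hR (closedBall_subset_closedBall (by linarith) hy)) hxy h
    have : 0 ≤ C / (1 - C * ε) * ‖h‖ ^ 2 := by positivity
    linear_combination hlow + this
  · filter_upwards [closedBall_mem_nhds (0 : EuclideanSpace ℝ (Fin n)) (by positivity : 0 < R / 4)]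
      with h hh
    rw [mem_closedBall_zero_iff] at hh
    obtain ⟨y₁, hy₁, h₁⟩ := hmax (x + h) (by simpa [dist_eq_norm] using hh)
    obtain ⟨y₂, hy₂, h₂⟩ := hmax (x - h) (by simpa [dist_eq_norm] using hh)
    have hseg : segment ℝ y₁ y₂ ⊆ closedBall x (R / 2) :=
      (convex_closedBall x (R / 2)).segment_subset hy₁ hy₂
    have hupp := supConv_second_difference_le hbdd hε hC hCε h₁ h₂
      (hhalf (hseg (midpoint_mem_segment y₁ y₂)))
      (hsc.add_le_two_mul_midpoint (hseg.trans (closedBall_subset_closedBall (by linarith))))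
    have : 0 ≤ 1 / (2 * ε) * ‖h‖ ^ 2 := by positivity
    linear_combination hupp + this

theorem eventually_hasGradientAt_supConv {M : ℝ} (hΩ : IsOpen Ω) (hu : ContinuousOn u Ω)
    (hM : ∀ y ∈ Ω, |u y| ≤ M) (hsc : LocallySemiconcaveOn Ω u) {x : EuclideanSpace ℝ (Fin n)}
    (hx : x ∈ Ω) :
    ∀ᶠ ε in 𝓝[>] 0, ∃ y ∈ closedBall x (2 * √(M * ε)),
      supConv ε Ω u x = u y - ‖x - y‖ ^ 2 / (2 * ε) ∧
      HasGradientAt (supConv ε Ω u) (ε⁻¹ • (y - x)) x := by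
  obtain ⟨R, hR, hRΩ⟩ := nhds_basis_closedBall.mem_iff.1 (hΩ.mem_nhds hx)
  obtain ⟨C, hC, hsc⟩ := hsc _ hRΩ (isCompact_closedBall x R)
  have hCε : ∀ᶠ ε in 𝓝 (0 : ℝ), C * ε < 1 :=
    (continuous_const.mul continuous_id).continuousAt.eventually_lt continuousAt_const
      (by simp)
  have hρ : ∀ᶠ ε in 𝓝 (0 : ℝ), 2 * √(M * ε) < R / 4 :=
    (by fun_prop : Continuous fun ε => 2 * √(M * ε)).continuousAt.eventually_lt
      continuousAt_const (by simpa using hR)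
  filter_upwards [self_mem_nhdsWithin, nhdsWithin_le_nhds hCε, nhdsWithin_le_nhds hρ]
    with ε hε hCε hρ
  exact hasGradientAt_supConv_of_closedBall_subset hu hM hRΩ hC hsc hε hCε hρ

end supConv

theorem supConv_gradient_pointwise_convergence_general
    {n : ℕ} (Ω : Set (EuclideanSpace ℝ (Fin n)))
    (hΩopen : IsOpen Ω)
    (u : EuclideanSpace ℝ (Fin n) → ℝ)
    (hu : ContinuousOn u Ω) (hubdd : ∃ M : ℝ, ∀ y ∈ Ω, |u y| ≤ M)
    (hsc : LocallySemiconcaveOn Ω u)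
    (x : EuclideanSpace ℝ (Fin n)) (hx : x ∈ Ω)
    (hdiff : DifferentiableAt ℝ u x) :
    (∃ ε₀ > (0:ℝ), ∀ ε : ℝ, 0 < ε → ε < ε₀ →
        DifferentiableAt ℝ (supConv ε Ω u) x) ∧
    Tendsto (fun ε : ℝ => gradient (supConv ε Ω u) x)
      (nhdsWithin 0 (Set.Ioi 0)) (nhds (gradient u x)) := by
  obtain ⟨M, hM⟩ := hubdd
  have hgrad := eventually_hasGradientAt_supConv hΩopen hu hM hsc hx
  refine ⟨?_, hdiff.hasGradientAt.tendsto_of_le_quadratic_penalty ?_ ?_⟩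
  · obtain ⟨ε₀, hε₀, hsub⟩ := mem_nhdsGT_iff_exists_Ioo_subset.1 hgrad
    refine ⟨ε₀, hε₀, fun ε hε hεε₀ => ?_⟩
    obtain ⟨y, -, -, hy⟩ := hsub ⟨hε, hεε₀⟩
    exact hy.differentiableAt
  · refine squeeze_zero_norm' ?_ (((by fun_prop : Continuous fun ε => 2 * √(M * ε)).tendsto' 0 0
      (by simp)).mono_left nhdsWithin_le_nhds)
    filter_upwards [hgrad, self_mem_nhdsWithin] with ε ⟨y, hy, _, hyx⟩ (hε : 0 < ε)
    rw [hyx.gradient, smul_inv_smul₀ hε.ne']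
    exact mem_closedBall_iff_norm.1 hy
  · have hxg : ∀ᶠ ε in 𝓝 (0 : ℝ), x + ε • gradient u x ∈ Ω :=
      (by fun_prop : Continuous fun ε : ℝ => x + ε • gradient u x).continuousAt.preimage_mem_nhds
        (by simpa using hΩopen.mem_nhds hx)
    filter_upwards [hgrad, self_mem_nhdsWithin, nhdsWithin_le_nhds hxg]
      with ε ⟨y, _, hxy, hyx⟩ (hε : 0 < ε) hxg
    have hbdd : BddAbove (u '' Ω) := bddAbove_image_of_forall_abs_le hM
    have hle := le_supConv hbdd hε x hxg
    rw [sub_add_cancel_left, norm_neg] at hle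
    rwa [hyx.gradient, smul_inv_smul₀ hε.ne', add_sub_cancel, norm_sub_rev, ← hxy]

theorem supConv_gradient_pointwise_convergence
    {n : ℕ} (Ω : Set (EuclideanSpace ℝ (Fin n)))
    (hΩopen : IsOpen Ω) (hΩbdd : Bornology.IsBounded Ω)
    (u : EuclideanSpace ℝ (Fin n) → ℝ)
    (hu : ContinuousOn u Ω) (hubdd : ∃ M : ℝ, ∀ y ∈ Ω, |u y| ≤ M)
    (hsc : LocallySemiconcaveOn Ω u)
    (x : EuclideanSpace ℝ (Fin n)) (hx : x ∈ Ω)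
    (hdiff : DifferentiableAt ℝ u x) :
    (∃ ε₀ > (0:ℝ), ∀ ε : ℝ, 0 < ε → ε < ε₀ →
        DifferentiableAt ℝ (supConv ε Ω u) x) ∧
    Tendsto (fun ε : ℝ => gradient (supConv ε Ω u) x)
      (nhdsWithin 0 (Set.Ioi 0)) (nhds (gradient u x)) :=
  supConv_gradient_pointwise_convergence_general Ω hΩopen u hu hubdd hsc x hx hdiff
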